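/- Suppose Ā021 + Ā121 Ḡ11 + Ā122 Ḡ21 = 0 and Ā011 + Ā111 Ḡ11 + Ā112 Ḡ21 + Ā211 Ḡ11^2 + Ā212 Ḡ21 Ḡ11 = 0, with Ā122 invertible. Define B0 = Ā011 - Ā112 Ā122^{-1} Ā021, B1 = Ā111 - Ā112 Ā122^{-1} Ā121 - Ā212 Ā122^{-1} Ā021, B2 = Ā211 - Ā212 Ā122^{-1} Ā121. Then B0 + B1 Ḡ11 + B2 Ḡ11^2 = 0 and Ḡ21 = -Ā122^{-1}(Ā021 + Ā121 Ḡ11). -/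
import Mathlib


theorem stmt14 {ℓ n : ℕ}
    (A011 A111 A211 G11 : Matrix (Fin ℓ) (Fin ℓ) ℝ)
    (A021 A121 G21 : Matrix (Fin n) (Fin ℓ) ℝ)
    (A112 A212 : Matrix (Fin ℓ) (Fin n) ℝ)
    (A122 : Matrix (Fin n) (Fin n) ℝ)
    (hinv : IsUnit A122)
    (h1 : A021 + A121 * G11 + A122 * G21 = 0)
    (h2 : A011 + A111 * G11 + A112 * G21 + A211 * G11 ^ 2 + A212 * (G21 * G11) = 0) :
    (A011 - A112 * A122⁻¹ * A021) +
      (A111 - A112 * A122⁻¹ * A121 - A212 * A122⁻¹ * A021) * G11 +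
      (A211 - A212 * A122⁻¹ * A121) * G11 ^ 2 = 0 ∧
    G21 = -(A122⁻¹ * (A021 + A121 * G11)) := by
  have hii : A122⁻¹ * A122 = 1 :=
    Matrix.nonsing_inv_mul _ ((Matrix.isUnit_iff_isUnit_det _).mp hinv)
  have hG : A122 * G21 = -(A021 + A121 * G11) := by
    have : A021 + A121 * G11 + A122 * G21 - (A021 + A121 * G11) = -(A021 + A121 * G11) := by
      rw [h1]; abel
    rw [← this]; abel
  have hG21 : G21 = -(A122⁻¹ * (A021 + A121 * G11)) := by
    calc G21 = (A122⁻¹ * A122) * G21 := by rw [hii, Matrix.one_mul]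
    _ = A122⁻¹ * (A122 * G21) := by rw [Matrix.mul_assoc]
    _ = -(A122⁻¹ * (A021 + A121 * G11)) := by rw [hG, Matrix.mul_neg]
  refine ⟨?_, hG21⟩
  have h2' := h2
  rw [hG21] at h2'
  rw [← h2']
  simp only [Matrix.mul_add, Matrix.add_mul, Matrix.sub_mul, Matrix.mul_neg, Matrix.neg_mul,
    Matrix.mul_assoc, sub_eq_add_neg, pow_two]
  abel
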